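/- Let U be a real random variable with distribution F satisfying E[U] = 0 and E[U²] = 1, let τ > 0, and let λ ↦ p(y; λ) be three times continuously differentiable in λ with derivatives dominated near λ₀ by an F-integrable function so that differentiation under the integral sign is justified, and suppose p(y; λ₀) > 0. Define l(η) = log ∫ p(y; λ₀ + τ √η · u) dF(u) for η > 0. If ∫ u³ dF(u) ≠ 0 and ∇³_λ p(y; λ₀) ≠ 0, then the second derivative l″(η) diverges as η → 0⁺: |∇²_η l(η)| → ∞ as η ↓ 0, so the second-order derivative of the reparameterized log density is unbounded near η = 0. -/

import Mathlib

/-!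
Write `m s = ∫ p (l₀ + τ s u) dF(u)`, so that `l η = log (m √η)`. For `φ = log ∘ m`,
differentiating under the integral gives `φ'(0) = τ E[U] p'(l₀) / p(l₀) = 0` and
`φ'''(0) = τ³ E[U³] p'''(l₀) / p(l₀) ≠ 0`. For any such `φ`,
`(φ ∘ √)''(η) = (√η φ''(√η) - φ'(√η)) / (4 η^{3/2})`, and by l'Hôpital the numerator is
`φ'''(0) η / 2 + o(η)`, so the second derivative behaves like `φ'''(0) / (8 √η)`.
-/

open MeasureTheory Filter Topology

lemma tendsto_sqrt_nhdsGT_zero : Tendsto Real.sqrt (𝓝[>] 0) (𝓝[>] 0) :=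
  tendsto_nhdsWithin_iff.2
    ⟨(Real.continuous_sqrt.tendsto' 0 0 Real.sqrt_zero).mono_left nhdsWithin_le_nhds,
      eventually_nhdsWithin_of_forall fun _ hx => Real.sqrt_pos.2 hx⟩

section CompSqrt

variable {φ φ' φ'' φ''' : ℝ → ℝ}

lemma hasDerivAt_comp_sqrt {η : ℝ} (hη : 0 < η) (h : HasDerivAt φ (φ' √η) √η) :
    HasDerivAt (fun η => φ √η) (φ' √η / (2 * √η)) η :=
  (h.comp η (Real.hasDerivAt_sqrt hη.ne')).congr_deriv (by ring)

lemma eventually_deriv_deriv_comp_sqrt (h1 : ∀ᶠ s in 𝓝 0, HasDerivAt φ (φ' s) s)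
    (h2 : ∀ᶠ s in 𝓝 0, HasDerivAt φ' (φ'' s) s) :
    ∀ᶠ η in 𝓝[>] 0,
      deriv (deriv fun η => φ √η) η = (√η * φ'' √η - φ' √η) / (4 * √η ^ 3) := by
  -- `√η` is near `0` for all `η` near `0`, negative ones included, since `√η = 0` there
  have h := (Real.continuous_sqrt.tendsto' 0 0 Real.sqrt_zero).eventually (h1.and h2)
  filter_upwards [self_mem_nhdsWithin, nhdsWithin_le_nhds h.eventually_nhds] with η hη hnear
  have hderiv : deriv (fun η => φ √η) =ᶠ[𝓝 η] fun x => φ' √x / (2 * √x) := by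
    filter_upwards [hnear, Ioi_mem_nhds hη] with x hx hx0
    exact (hasDerivAt_comp_sqrt hx0 hx.1).deriv
  have hnum := hasDerivAt_comp_sqrt hη hnear.self_of_nhds.2
  have hden := (Real.hasDerivAt_sqrt (ne_of_gt hη)).const_mul 2
  have hs : 0 < √η := Real.sqrt_pos.2 hη
  rw [hderiv.deriv_eq, (hnum.fun_div hden (by positivity)).deriv]
  field_simp
  ring

lemma tendsto_sub_div_sq_nhdsGT_zero (h2 : ∀ᶠ s in 𝓝 0, HasDerivAt φ' (φ'' s) s)
    (h3 : ∀ᶠ s in 𝓝 0, HasDerivAt φ'' (φ''' s) s) (h3c : ContinuousAt φ''' 0) (h1z : φ' 0 = 0) :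
    Tendsto (fun s => (s * φ'' s - φ' s) / s ^ 2) (𝓝[>] 0) (𝓝 (φ''' 0 / 2)) := by
  obtain ⟨ε, hε, hball⟩ := Metric.eventually_nhds_iff.1 (h2.and h3)
  have hIoo : ∀ s ∈ Set.Ioo 0 ε, dist s 0 < ε := fun s hs => by
    rw [Real.dist_0_eq_abs, abs_of_pos hs.1]; exact hs.2
  refine HasDerivAt.lhopital_zero_right_on_Ioo hε (f' := fun s => s * φ''' s)
    (g' := fun s => 2 * s) (fun s hs => ?_) (fun s _ => by simpa using hasDerivAt_pow 2 s)
    (fun s hs => by positivity [hs.1]) ?_ ?_ ?_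
  · obtain ⟨hs2, hs3⟩ := hball (hIoo s hs)
    simpa using ((hasDerivAt_id s).fun_mul hs3).fun_sub hs2
  · have hcont : ContinuousAt (fun s => s * φ'' s - φ' s) 0 :=
      (continuousAt_id.mul h3.self_of_nhds.continuousAt).sub h2.self_of_nhds.continuousAt
    simpa [h1z] using hcont.tendsto.mono_left nhdsWithin_le_nhds
  · simpa using ((continuous_pow 2).tendsto' (0 : ℝ) 0 (by simp)).mono_left nhdsWithin_le_nhds
  · refine ((h3c.tendsto.mono_left nhdsWithin_le_nhds).div_const 2).congr' ?_
    filter_upwards [self_mem_nhdsWithin] with s hs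
    field_simp [(Set.mem_Ioi.1 hs).ne']

theorem tendsto_abs_deriv_deriv_comp_sqrt_atTop (h1 : ∀ᶠ s in 𝓝 0, HasDerivAt φ (φ' s) s)
    (h2 : ∀ᶠ s in 𝓝 0, HasDerivAt φ' (φ'' s) s) (h3 : ∀ᶠ s in 𝓝 0, HasDerivAt φ'' (φ''' s) s)
    (h3c : ContinuousAt φ''' 0) (h1z : φ' 0 = 0) (h3z : φ''' 0 ≠ 0) :
    Tendsto (fun η => |deriv (deriv fun η => φ √η) η|) (𝓝[>] 0) atTop := by
  have hlim := ((tendsto_sub_div_sq_nhdsGT_zero h2 h3 h3c h1z).comp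
    tendsto_sqrt_nhdsGT_zero).abs.div_const 4
  refine (Tendsto.pos_mul_atTop (by positivity) hlim
    (tendsto_inv_nhdsGT_zero.comp tendsto_sqrt_nhdsGT_zero)).congr' ?_
  filter_upwards [self_mem_nhdsWithin, eventually_deriv_deriv_comp_sqrt h1 h2] with η hη hformula
  have hs : 0 < √η := Real.sqrt_pos.2 hη
  rw [hformula, Function.comp_apply, Function.comp_apply, abs_div, abs_div,
    abs_of_pos (by positivity : (0 : ℝ) < 4 * √η ^ 3),
    abs_of_pos (by positivity : (0 : ℝ) < √η ^ 2)]
  field_simp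

end CompSqrt

lemma HasDerivAt.div_of_scaled {a b : ℝ → ℝ} {a' b' τ s : ℝ} (ha : HasDerivAt a (τ * a') s)
    (hb : HasDerivAt b (τ * b') s) (hs : b s ≠ 0) :
    HasDerivAt (fun s => a s / b s) (τ * (a' / b s - a s / b s * (b' / b s))) s :=
  (ha.fun_div hb hs).congr_deriv (by field_simp)

theorem tendsto_abs_deriv_deriv_log_comp_sqrt_atTop {g : ℕ → ℝ → ℝ} {τ : ℝ} (hτ : τ ≠ 0)
    (hg : ∀ k < 3, ∀ᶠ s in 𝓝 0, HasDerivAt (g k) (τ * g (k + 1) s) s)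
    (hg3 : ContinuousAt (g 3) 0) (hg00 : g 0 0 ≠ 0) (hg10 : g 1 0 = 0) (hg30 : g 3 0 ≠ 0) :
    Tendsto (fun η => |deriv (deriv fun η => Real.log (g 0 √η)) η|) (𝓝[>] 0) atTop := by
  set r : ℕ → ℝ → ℝ := fun k s => g k s / g 0 s with hr_def
  have hg0 := hg 0 (by norm_num)
  have hne : ∀ᶠ s in 𝓝 0, g 0 s ≠ 0 := hg0.self_of_nhds.continuousAt.eventually_ne hg00
  have hr : ∀ k < 3, ∀ᶠ s in 𝓝 0, HasDerivAt (r k) (τ * (r (k + 1) s - r k s * r 1 s)) s :=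
    fun k hk => by
      filter_upwards [hg k hk, hg0, hne] with s hk h0 hs
      exact hk.div_of_scaled h0 hs
  have hrc : ∀ k ≤ 3, ContinuousAt (r k) 0 := fun k hk =>
    (hk.lt_or_eq.elim (fun hk => (hg k hk).self_of_nhds.continuousAt) fun hk => hk ▸ hg3).div
      hg0.self_of_nhds.continuousAt hg00
  refine tendsto_abs_deriv_deriv_comp_sqrt_atTop (φ := fun s => Real.log (g 0 s))
    (φ' := fun s => τ * r 1 s) (φ'' := fun s => τ ^ 2 * (r 2 s - r 1 s ^ 2))
    (φ''' := fun s => τ ^ 3 * (r 3 s - 3 * r 1 s * r 2 s + 2 * r 1 s ^ 3)) ?_ ?_ ?_ ?_ ?_ ?_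
  · filter_upwards [hg0, hne] with s h0 hs
    exact (h0.log hs).congr_deriv (by simp only [hr_def]; ring)
  · filter_upwards [hr 1 (by norm_num)] with s h1
    exact (h1.const_mul τ).congr_deriv (by ring)
  · filter_upwards [hr 1 (by norm_num), hr 2 (by norm_num)] with s h1 h2
    exact ((h2.fun_sub (h1.fun_pow 2)).const_mul (τ ^ 2)).congr_deriv (by ring)
  · have := hrc 1 (by norm_num); have := hrc 2 (by norm_num); have := hrc 3 le_rfl
    fun_prop
  · simp [hr_def, hg10]
  · simpa [hr_def, hg10] using ⟨hτ, hg30, hg00⟩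

/-- `τ⁻ᵏ` times the `k`-th derivative in `s` of the mixture `s ↦ ∫ p (l₀ + τ s u) dF(u)`. -/
noncomputable def scaledMixtureDeriv (F : Measure ℝ) (p : ℝ → ℝ) (τ l₀ : ℝ) (k : ℕ) (s : ℝ) : ℝ :=
  ∫ u, u ^ k * iteratedDeriv k p (l₀ + τ * s * u) ∂F

def MixtureDerivsDominated (F : Measure ℝ) (p : ℝ → ℝ) (τ l₀ : ℝ) (n : ℕ) (D : ℝ → ℝ) (ε : ℝ) :
    Prop :=
  ∀ᵐ u ∂F, ∀ ξ : ℝ, |ξ| < ε → ∀ k ≤ n, |u ^ k * iteratedDeriv k p (l₀ + τ * ξ * u)| ≤ D u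

namespace scaledMixtureDeriv

variable {F : Measure ℝ} {p : ℝ → ℝ} {τ l₀ : ℝ} {n k : ℕ} {D : ℝ → ℝ} {ε s : ℝ}

lemma zero_left : scaledMixtureDeriv F p τ l₀ 0 = fun s => ∫ u, p (l₀ + τ * s * u) ∂F := by
  funext s
  simp [scaledMixtureDeriv]

lemma apply_zero : scaledMixtureDeriv F p τ l₀ k 0 = (∫ u, u ^ k ∂F) * iteratedDeriv k p l₀ := by
  simp only [scaledMixtureDeriv, mul_zero, zero_mul, add_zero]
  exact integral_mul_const _ _

lemma continuous_integrand (hp : ContDiff ℝ n p) (hk : k ≤ n) :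
    Continuous fun x : ℝ × ℝ => x.2 ^ k * iteratedDeriv k p (l₀ + τ * x.1 * x.2) := by
  have := hp.continuous_iteratedDeriv k (by exact_mod_cast hk)
  fun_prop

lemma hasDerivAt_integrand (hp : ContDiff ℝ n p) (hk : k < n) (u t : ℝ) :
    HasDerivAt (fun t => u ^ k * iteratedDeriv k p (l₀ + τ * t * u))
      (τ * (u ^ (k + 1) * iteratedDeriv (k + 1) p (l₀ + τ * t * u))) t := by
  have hin : HasDerivAt (fun t => l₀ + τ * t * u) (τ * u) t := by
    simpa using ((hasDerivAt_id t).const_mul τ).mul_const u |>.const_add l₀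
  have hout := ((hp.differentiable_iteratedDeriv k (by exact_mod_cast hk))
    (l₀ + τ * t * u)).hasDerivAt
  rw [← iteratedDeriv_succ] at hout
  exact ((hout.comp t hin).const_mul (u ^ k)).congr_deriv (by ring)

lemma hasDerivAt (hp : ContDiff ℝ n p) (hD : Integrable D F)
    (hdom : MixtureDerivsDominated F p τ l₀ n D ε) (hk : k < n) (hs : |s| < ε) :
    HasDerivAt (scaledMixtureDeriv F p τ l₀ k) (τ * scaledMixtureDeriv F p τ l₀ (k + 1) s) s := by
  have hball : Metric.ball s (ε - |s|) ∈ 𝓝 s := Metric.ball_mem_nhds s (by linarith)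
  have hmem : ∀ t ∈ Metric.ball s (ε - |s|), |t| < ε := fun t ht => by
    have := abs_sub_abs_le_abs_sub t s
    rw [Metric.mem_ball, Real.dist_eq] at ht
    linarith
  have hmeas : ∀ j ≤ n, ∀ t : ℝ,
      AEStronglyMeasurable (fun u => u ^ j * iteratedDeriv j p (l₀ + τ * t * u)) F :=
    fun j hj t =>
      ((continuous_integrand hp hj).comp (Continuous.prodMk_right t)).aestronglyMeasurable
  have hint : Integrable (fun u => u ^ k * iteratedDeriv k p (l₀ + τ * s * u)) F := by
    refine hD.mono' (hmeas k hk.le s) ?_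
    filter_upwards [hdom] with u hu using hu s hs k hk.le
  have hbound : ∀ᵐ u ∂F, ∀ t ∈ Metric.ball s (ε - |s|),
      ‖τ * (u ^ (k + 1) * iteratedDeriv (k + 1) p (l₀ + τ * t * u))‖ ≤ |τ| * D u := by
    filter_upwards [hdom] with u hu t ht
    rw [Real.norm_eq_abs, abs_mul]
    exact mul_le_mul_of_nonneg_left (hu t (hmem t ht) (k + 1) hk) (abs_nonneg τ)
  have h := (hasDerivAt_integral_of_dominated_loc_of_deriv_le hball
    (Eventually.of_forall (hmeas k hk.le)) hint ((hmeas (k + 1) hk s).const_mul τ) hbound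
    (hD.const_mul |τ|) (Eventually.of_forall fun u t _ => hasDerivAt_integrand hp hk u t)).2
  rwa [integral_const_mul] at h

lemma continuousAt (hp : ContDiff ℝ n p) (hD : Integrable D F)
    (hdom : MixtureDerivsDominated F p τ l₀ n D ε) (hk : k ≤ n) (hs : |s| < ε) :
    ContinuousAt (scaledMixtureDeriv F p τ l₀ k) s := by
  have hball : ∀ᶠ t in 𝓝 s, |t| < ε := continuous_abs.continuousAt.eventually (gt_mem_nhds hs)
  refine continuousAt_of_dominated (bound := D) ?_ ?_ hD
    (Eventually.of_forall fun u => ((continuous_integrand hp hk).comp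
      (Continuous.prodMk_left u)).continuousAt)
  · exact Eventually.of_forall fun t =>
      ((continuous_integrand hp hk).comp (Continuous.prodMk_right t)).aestronglyMeasurable
  · filter_upwards [hball] with t ht
    filter_upwards [hdom] with u hu using hu t ht k hk

end scaledMixtureDeriv

theorem reparameterized_second_derivative_unbounded_general
    (F : Measure ℝ) [IsProbabilityMeasure F]
    (hU1 : ∫ u, u ∂F = 0) (hU3 : ∫ u, u ^ 3 ∂F ≠ 0)
    (τ : ℝ) (hτ : 0 < τ) (l₀ : ℝ)
    (p : ℝ → ℝ)
    (hsmooth : ContDiff ℝ 3 p)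
    (hp3 : iteratedDeriv 3 p l₀ ≠ 0)
    -- domination justifying differentiation under the integral sign
    (D : ℝ → ℝ) (hD : Integrable D F) (ε : ℝ) (hε : 0 < ε)
    (hdom : ∀ᵐ u ∂F, ∀ ξ : ℝ, |ξ| < ε → ∀ k ≤ 3,
      |u ^ k * iteratedDeriv k p (l₀ + τ * ξ * u)| ≤ D u)
    (hpos : 0 < p l₀) :
    Tendsto
      (fun η : ℝ =>
        |deriv (deriv fun η' : ℝ => Real.log (∫ u, p (l₀ + τ * Real.sqrt η' * u) ∂F)) η|)
      (𝓝[>] (0 : ℝ)) atTop := by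
  set g := scaledMixtureDeriv F p τ l₀
  have h0 : |(0 : ℝ)| < ε := by rwa [abs_zero]
  have hnear : ∀ᶠ s in 𝓝 (0 : ℝ), |s| < ε :=
    continuous_abs.continuousAt.eventually (gt_mem_nhds h0)
  have hg : ∀ k < 3, ∀ᶠ s in 𝓝 0, HasDerivAt (g k) (τ * g (k + 1) s) s := fun k hk =>
    hnear.mono fun s hs => scaledMixtureDeriv.hasDerivAt hsmooth hD hdom hk hs
  have h := tendsto_abs_deriv_deriv_log_comp_sqrt_atTop hτ.ne' hg
    (scaledMixtureDeriv.continuousAt hsmooth hD hdom le_rfl h0)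
    (by simpa [g, scaledMixtureDeriv.apply_zero] using hpos.ne')
    (by simp [g, scaledMixtureDeriv.apply_zero, hU1])
    (by simpa [g, scaledMixtureDeriv.apply_zero] using mul_ne_zero hU3 hp3)
  simpa only [g, scaledMixtureDeriv.zero_left] using h

/-- For the reparameterized mixture log-density
`l(η) = log ∫ p(y; l₀ + τ√η u) dF(u)`, `η > 0`, with `E[U] = 0` and `E[U²] = 1`, if
`∫ u³ dF ≠ 0` and `∇³_λ p(y; l₀) ≠ 0`, then the second derivative `l″(η)` diverges as
`η → 0⁺`: `|∇²_η l(η)| → ∞`. -/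
theorem reparameterized_second_derivative_unbounded
    (F : Measure ℝ) [IsProbabilityMeasure F]
    (hU1 : ∫ u, u ∂F = 0) (hU2 : ∫ u, u ^ 2 ∂F = 1)
    (hU3int : Integrable (fun u => u ^ 3) F) (hU3 : ∫ u, u ^ 3 ∂F ≠ 0)
    (τ : ℝ) (hτ : 0 < τ) (l₀ : ℝ)
    (p : ℝ → ℝ)
    (hsmooth : ContDiff ℝ 3 p)
    (hp3 : iteratedDeriv 3 p l₀ ≠ 0)
    -- domination justifying differentiation under the integral sign
    (D : ℝ → ℝ) (hD : Integrable D F) (ε : ℝ) (hε : 0 < ε)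
    (hdom : ∀ᵐ u ∂F, ∀ ξ : ℝ, |ξ| < ε → ∀ k ≤ 3,
      |u ^ k * iteratedDeriv k p (l₀ + τ * ξ * u)| ≤ D u)
    (hpos : 0 < p l₀) :
    Tendsto
      (fun η : ℝ =>
        |deriv (deriv fun η' : ℝ => Real.log (∫ u, p (l₀ + τ * Real.sqrt η' * u) ∂F)) η|)
      (𝓝[>] (0 : ℝ)) atTop :=
  reparameterized_second_derivative_unbounded_general F hU1 hU3 τ hτ l₀ p hsmooth hp3 D hD ε hε hdom
    hpos
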